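/- arXiv:2308.16340 — 5 statements merged into one kernel-verified Lean document; each statement's English description precedes it below -/
import Mathlib

section
/- For two distinct points v₁, v₂ in the plane, pdist(v₁, v₂) = 2·|v₁ - v₂|, where pdist is defined as half the integral over θ ∈ [0, 2π] of the distance between the lines through v₁ and v₂ in direction u_θ. -/
/-! Writing `v₁ - v₂` in polar form `r (cos φ, sin φ)`, the distance between the two lines in
direction `u_θ` is `r |sin (θ - φ)|`, and `|sin|` integrates to `4` over any interval of length
`2π`. -/

open MeasureTheory Real Set

noncomputable section

abbrev E2 := EuclideanSpace ℝ (Fin 2)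

def uvec (θ : ℝ) : E2 := WithLp.toLp 2 ![Real.cos θ, Real.sin θ]

/-- `uvec θ` rotated by π/2 clockwise; the distance between the parallel lines through
`p` and `q` in direction `uvec θ` equals `|⟪p - q, rotvec θ⟫|`. -/
def rotvec (θ : ℝ) : E2 := WithLp.toLp 2 ![Real.sin θ, -Real.cos θ]

/-- `pdist` between two points: half the integral over `θ ∈ [0, 2π]` of the distance
between the lines through the points in direction `uvec θ`. -/
def pdistPts (v₁ v₂ : E2) : ℝ :=
  (1/2) * ∫ θ in (0:ℝ)..(2*π), |(inner ℝ (v₁ - v₂) (rotvec θ) : ℝ)|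

theorem integral_abs_sin_add_two_pi (t : ℝ) : ∫ x in t..t + 2 * π, |sin x| = 4 := by
  have hper : Function.Periodic (fun x ↦ |sin x|) π := fun x ↦ by
    simp only [sin_add_pi, abs_neg]
  have hint : ∀ a b : ℝ, IntervalIntegrable (fun x ↦ |sin x|) volume a b := fun a b ↦
    (continuous_abs.comp continuous_sin).intervalIntegrable a b
  have hhalf : ∫ x in (0 : ℝ)..π, |sin x| = 2 := by
    rw [intervalIntegral.integral_congr (g := sin), integral_sin, cos_zero, cos_pi]
    · norm_num
    · intro x hx
      rw [uIcc_of_le pi_pos.le] at hx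
      exact abs_of_nonneg (sin_nonneg_of_nonneg_of_le_pi hx.1 hx.2)
  have htwo := hper.intervalIntegral_add_zsmul_eq 2 t hint
  rw [hper.intervalIntegral_add_eq t 0, zero_add, hhalf] at htwo
  simp only [zsmul_eq_mul, Int.cast_ofNat] at htwo
  linarith

theorem exists_inner_rotvec_eq (w : E2) :
    ∃ φ : ℝ, ∀ θ, inner ℝ w (rotvec θ) = ‖w‖ * sin (θ - φ) := by
  set z : ℂ := Complex.orthonormalBasisOneI.repr.symm w
  have hnorm : ‖z‖ = ‖w‖ := LinearIsometryEquiv.norm_map _ w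
  refine ⟨Complex.arg z, fun θ ↦ ?_⟩
  have hre : ‖w‖ * cos (Complex.arg z) = w 0 := by
    rw [← hnorm, Complex.norm_mul_cos_arg]; simp [z]
  have him : ‖w‖ * sin (Complex.arg z) = w 1 := by
    rw [← hnorm, Complex.norm_mul_sin_arg]; simp [z]
  simp only [rotvec, PiLp.inner_apply, Fin.sum_univ_two, sin_sub, Fin.isValue, Matrix.cons_val_zero,
    Matrix.cons_val_one, Matrix.cons_val_fin_one, RCLike.inner_apply, ringHom_apply, neg_mul]
  linear_combination cos θ * him - sin θ * hre

theorem integral_abs_inner_rotvec (w : E2) :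
    ∫ θ in (0 : ℝ)..(2 * π), |inner ℝ w (rotvec θ)| = 4 * ‖w‖ := by
  obtain ⟨φ, hφ⟩ := exists_inner_rotvec_eq w
  simp only [hφ, abs_mul, abs_norm]
  rw [intervalIntegral.integral_const_mul, intervalIntegral.integral_comp_sub_right
    (fun x ↦ |sin x|), zero_sub, sub_eq_neg_add, integral_abs_sin_add_two_pi, mul_comm]

theorem pdist_of_points_general (v₁ v₂ : E2) :
    pdistPts v₁ v₂ = 2 * dist v₁ v₂ := by
  rw [pdistPts, integral_abs_inner_rotvec, dist_eq_norm]
  ring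

theorem pdist_of_points (v₁ v₂ : E2) (h : v₁ ≠ v₂) :
    pdistPts v₁ v₂ = 2 * dist v₁ v₂ :=
  pdist_of_points_general v₁ v₂

end
end

section
/- pdist is convex under Minkowski combination: for convex bodies C₁, C₂, D and t ∈ [0,1], pdist(tC₁ + (1−t)C₂, D) ≤ t·pdist(C₁, D) + (1−t)·pdist(C₂, D). -/
open MeasureTheory Real Set Pointwise

noncomputable section

def IsConvexBody (C : Set E2) : Prop :=
  IsCompact C ∧ Convex ℝ C ∧ (interior C).Nonempty

/-- `n θ` is the touching point of the supporting line of `C` with inward normal `uvec θ`. -/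
def IsNormalSel (C : Set E2) (n : ℝ → E2) : Prop :=
  ∀ θ, n θ ∈ C ∧ ∀ y ∈ C, (inner ℝ (n θ) (uvec θ) : ℝ) ≤ inner ℝ y (uvec θ)

/-- pseudodistance computed from normal selections of the two bodies. -/
def pdistN (n₁ n₂ : ℝ → E2) : ℝ :=
  (1/2) * ∫ θ in (0:ℝ)..(2*π), |(inner ℝ (n₁ θ - n₂ θ) (rotvec θ) : ℝ)|

/-- distance from a point to the normal line of a body with normal selection `n`. -/
def pdistP (v : E2) (n : ℝ → E2) : ℝ :=
  (1/2) * ∫ θ in (0:ℝ)..(2*π), |(inner ℝ (v - n θ) (rotvec θ) : ℝ)|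

def hsup (C : Set E2) (θ : ℝ) : ℝ := sSup ((fun x => (inner ℝ x (rotvec θ) : ℝ)) '' C)
def hinf (C : Set E2) (θ : ℝ) : ℝ := sInf ((fun x => (inner ℝ x (rotvec θ) : ℝ)) '' C)

def pperN (C : Set E2) (n : ℝ → E2) : ℝ :=
  (1/2) * ∫ θ in (0:ℝ)..(2*π),
    (|hsup C θ - (inner ℝ (n θ) (rotvec θ) : ℝ)| + |hinf C θ - (inner ℝ (n θ) (rotvec θ) : ℝ)|)

def ConstantWidth (D : Set E2) (w : ℝ) : Prop :=
  ∀ d : E2, ‖d‖ = 1 →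
    sSup ((fun x => (inner ℝ x d : ℝ)) '' D) - sInf ((fun x => (inner ℝ x d : ℝ)) '' D) = w

end

/-!
Write `g(θ) = ⟪n θ, uvec θ⟫` for the support value of a body in direction `uvec θ`. Since `n θ'`
is a competitor at every `θ`, `g` is Lipschitz, and the envelope theorem gives
`⟪n θ, rotvec θ⟫ = -g'(θ)` wherever `g` is differentiable, hence almost everywhere. Support
values are additive under Minkowski combination, so almost everywhere the normal line of
`t • C₁ + (1 - t) • C₂` is the corresponding combination of those of `C₁` and `C₂`, and the
inequality follows from the triangle inequality under the integral.
-/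

open scoped InnerProductSpace NNReal

noncomputable section

lemma norm_uvec_sub_le (a b : ℝ) : ‖uvec a - uvec b‖ ≤ |a - b| := by
  have hsq : ‖uvec a - uvec b‖ ^ 2 = 2 - 2 * Real.cos (a - b) := by
    simp only [EuclideanSpace.norm_eq, Fin.sum_univ_two, uvec, WithLp.ofLp_sub, Pi.sub_apply,
      Matrix.cons_val_zero, Matrix.cons_val_one, Real.norm_eq_abs, sq_abs, Real.cos_sub]
    rw [Real.sq_sqrt (by positivity)]
    nlinarith [Real.sin_sq_add_cos_sq a, Real.sin_sq_add_cos_sq b]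
  have hcos := Real.one_sub_sq_div_two_le_cos (x := a - b)
  simpa using (sq_le_sq.mp (by nlinarith : ‖uvec a - uvec b‖ ^ 2 ≤ (a - b) ^ 2))

lemma hasDerivAt_inner_uvec (x : E2) (θ : ℝ) :
    HasDerivAt (fun s => ⟪x, uvec s⟫_ℝ) (-⟪x, rotvec θ⟫_ℝ) θ := by
  simp only [uvec, rotvec, PiLp.inner_apply, Fin.sum_univ_two, RCLike.inner_apply, conj_trivial,
    Matrix.cons_val_zero, Matrix.cons_val_one]
  exact (((Real.hasDerivAt_cos θ).mul_const (x 0)).add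
    ((Real.hasDerivAt_sin θ).mul_const (x 1))).congr_deriv (by ring)

lemma abs_inner_rotvec_le (x : E2) (θ : ℝ) : |⟪x, rotvec θ⟫_ℝ| ≤ ‖x‖ := by
  have hnorm : ‖rotvec θ‖ = 1 := by
    simp [EuclideanSpace.norm_eq, Fin.sum_univ_two, rotvec, Real.sin_sq_add_cos_sq]
  simpa [hnorm] using abs_real_inner_le_norm x (rotvec θ)

def normalSupport (n : ℝ → E2) (θ : ℝ) : ℝ := ⟪n θ, uvec θ⟫_ℝ

namespace IsNormalSel

variable {C : Set E2} {n : ℝ → E2}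

lemma lipschitzWith_normalSupport (hn : IsNormalSel C n) {R : ℝ≥0} (hR : ∀ x ∈ C, ‖x‖ ≤ R) :
    LipschitzWith R (normalSupport n) := by
  refine LipschitzWith.of_le_add_mul R fun a b => ?_
  have hbound : ⟪n b, uvec a - uvec b⟫_ℝ ≤ R * dist a b :=
    calc ⟪n b, uvec a - uvec b⟫_ℝ ≤ ‖n b‖ * ‖uvec a - uvec b‖ := real_inner_le_norm _ _
      _ ≤ R * dist a b :=
        mul_le_mul (hR _ (hn b).1) ((norm_uvec_sub_le a b).trans_eq (Real.dist_eq a b).symm)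
          (norm_nonneg _) R.2
  calc normalSupport n a ≤ ⟪n b, uvec a⟫_ℝ := (hn a).2 _ (hn b).1
    _ = normalSupport n b + ⟪n b, uvec a - uvec b⟫_ℝ := by
      rw [inner_sub_right, normalSupport]; ring
    _ ≤ normalSupport n b + R * dist a b := by linarith

lemma ae_differentiableAt_normalSupport (hn : IsNormalSel C n) (hC : Bornology.IsBounded C) :
    ∀ᵐ θ, DifferentiableAt ℝ (normalSupport n) θ := by
  obtain ⟨R, hR⟩ := hC.exists_norm_le
  exact (hn.lipschitzWith_normalSupport (R := R.toNNReal)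
    fun x hx => (hR x hx).trans (Real.le_coe_toNNReal R)).ae_differentiableAt

/-- The envelope theorem: `s ↦ ⟪n θ, uvec s⟫ - normalSupport n s` is nonnegative and vanishes
at `θ`. -/
lemma inner_rotvec_eq_neg_deriv (hn : IsNormalSel C n) {θ : ℝ}
    (hd : DifferentiableAt ℝ (normalSupport n) θ) :
    ⟪n θ, rotvec θ⟫_ℝ = -deriv (normalSupport n) θ := by
  have hmin : IsLocalMin (fun s => ⟪n θ, uvec s⟫_ℝ - normalSupport n s) θ :=
    Filter.Eventually.of_forall fun s => by
      simp only [normalSupport, sub_self]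
      exact sub_nonneg.2 ((hn s).2 _ (hn θ).1)
  have := hmin.hasDerivAt_eq_zero ((hasDerivAt_inner_uvec (n θ) θ).sub hd.hasDerivAt)
  linarith

lemma intervalIntegrable_inner_rotvec (hn : IsNormalSel C n) (hC : Bornology.IsBounded C)
    (a b : ℝ) : IntervalIntegrable (fun θ => ⟪n θ, rotvec θ⟫_ℝ) volume a b := by
  obtain ⟨R, hR⟩ := hC.exists_norm_le
  have hmeas : AEStronglyMeasurable (fun θ => ⟪n θ, rotvec θ⟫_ℝ) volume := by
    refine (aestronglyMeasurable_deriv (normalSupport n) volume).neg.congr ?_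
    filter_upwards [hn.ae_differentiableAt_normalSupport hC] with θ hθ
    exact (hn.inner_rotvec_eq_neg_deriv hθ).symm
  refine (intervalIntegrable_const (c := R)).mono_fun hmeas.restrict
    (Filter.Eventually.of_forall fun θ => ?_)
  dsimp only
  rw [Real.norm_eq_abs]
  exact ((abs_inner_rotvec_le _ _).trans (hR _ (hn θ).1)).trans (le_abs_self R)

lemma normalSupport_add_smul {C₁ C₂ : Set E2} {n₁ n₂ : ℝ → E2} {a b : ℝ} (ha : 0 ≤ a)
    (hb : 0 ≤ b) (hn : IsNormalSel (a • C₁ + b • C₂) n) (hn₁ : IsNormalSel C₁ n₁)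
    (hn₂ : IsNormalSel C₂ n₂) (θ : ℝ) :
    normalSupport n θ = a * normalSupport n₁ θ + b * normalSupport n₂ θ := by
  have hle : normalSupport n θ ≤ a * normalSupport n₁ θ + b * normalSupport n₂ θ := by
    have := (hn θ).2 _ (add_mem_add (smul_mem_smul_set (hn₁ θ).1) (smul_mem_smul_set (hn₂ θ).1))
    rwa [inner_add_left, real_inner_smul_left, real_inner_smul_left] at this
  obtain ⟨_, ⟨x, hx, rfl⟩, _, ⟨y, hy, rfl⟩, hxy⟩ := (hn θ).1
  dsimp only at hxy
  have hge : a * normalSupport n₁ θ + b * normalSupport n₂ θ ≤ normalSupport n θ := by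
    have hnθ : normalSupport n θ = a * ⟪x, uvec θ⟫_ℝ + b * ⟪y, uvec θ⟫_ℝ := by
      rw [normalSupport, ← hxy, inner_add_left, real_inner_smul_left, real_inner_smul_left]
    rw [hnθ]
    gcongr
    exacts [(hn₁ θ).2 x hx, (hn₂ θ).2 y hy]
  exact le_antisymm hle hge

lemma ae_inner_rotvec_add_smul {C₁ C₂ : Set E2} {n₁ n₂ : ℝ → E2} {a b : ℝ} (ha : 0 ≤ a)
    (hb : 0 ≤ b) (hn : IsNormalSel (a • C₁ + b • C₂) n) (hn₁ : IsNormalSel C₁ n₁)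
    (hn₂ : IsNormalSel C₂ n₂) (hC₁ : Bornology.IsBounded C₁) (hC₂ : Bornology.IsBounded C₂) :
    ∀ᵐ θ, ⟪n θ, rotvec θ⟫_ℝ = a * ⟪n₁ θ, rotvec θ⟫_ℝ + b * ⟪n₂ θ, rotvec θ⟫_ℝ := by
  filter_upwards [hn₁.ae_differentiableAt_normalSupport hC₁,
    hn₂.ae_differentiableAt_normalSupport hC₂] with θ hd₁ hd₂
  have hd : HasDerivAt (normalSupport n)
      (a * deriv (normalSupport n₁) θ + b * deriv (normalSupport n₂) θ) θ := by
    rw [funext (normalSupport_add_smul ha hb hn hn₁ hn₂)]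
    exact (hd₁.hasDerivAt.const_mul a).add (hd₂.hasDerivAt.const_mul b)
  rw [hn.inner_rotvec_eq_neg_deriv hd.differentiableAt, hd.deriv,
    hn₁.inner_rotvec_eq_neg_deriv hd₁, hn₂.inner_rotvec_eq_neg_deriv hd₂]
  ring

end IsNormalSel

lemma pdistN_le_of_ae_inner_rotvec_eq {n n₁ n₂ nD : ℝ → E2} {t : ℝ} (ht₀ : 0 ≤ t) (ht₁ : t ≤ 1)
    (hi : IntervalIntegrable (fun θ => ⟪n θ, rotvec θ⟫_ℝ) volume 0 (2 * π))
    (hi₁ : IntervalIntegrable (fun θ => ⟪n₁ θ, rotvec θ⟫_ℝ) volume 0 (2 * π))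
    (hi₂ : IntervalIntegrable (fun θ => ⟪n₂ θ, rotvec θ⟫_ℝ) volume 0 (2 * π))
    (hiD : IntervalIntegrable (fun θ => ⟪nD θ, rotvec θ⟫_ℝ) volume 0 (2 * π))
    (h : ∀ᵐ θ, ⟪n θ, rotvec θ⟫_ℝ = t * ⟪n₁ θ, rotvec θ⟫_ℝ + (1 - t) * ⟪n₂ θ, rotvec θ⟫_ℝ) :
    pdistN n nD ≤ t * pdistN n₁ nD + (1 - t) * pdistN n₂ nD := by
  have hint {m : ℝ → E2} (hm : IntervalIntegrable (fun θ => ⟪m θ, rotvec θ⟫_ℝ) volume 0 (2 * π)) :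
      IntervalIntegrable (fun θ => |⟪m θ - nD θ, rotvec θ⟫_ℝ|) volume 0 (2 * π) := by
    simpa only [inner_sub_left] using (hm.sub hiD).abs
  have hmono := intervalIntegral.integral_mono_ae (by positivity) (hint hi)
    (((hint hi₁).const_mul t).add ((hint hi₂).const_mul (1 - t))) (by
      filter_upwards [h] with θ hθ
      calc |⟪n θ - nD θ, rotvec θ⟫_ℝ|
          = |t * ⟪n₁ θ - nD θ, rotvec θ⟫_ℝ + (1 - t) * ⟪n₂ θ - nD θ, rotvec θ⟫_ℝ| := by
            simp only [inner_sub_left, hθ]; ring_nf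
        _ ≤ t * |⟪n₁ θ - nD θ, rotvec θ⟫_ℝ| + (1 - t) * |⟪n₂ θ - nD θ, rotvec θ⟫_ℝ| := by
            refine (abs_add_le _ _).trans_eq ?_
            rw [abs_mul, abs_mul, abs_of_nonneg ht₀, abs_of_nonneg (sub_nonneg.2 ht₁)])
  rw [intervalIntegral.integral_add ((hint hi₁).const_mul t) ((hint hi₂).const_mul (1 - t)),
    intervalIntegral.integral_const_mul, intervalIntegral.integral_const_mul] at hmono
  simp only [pdistN]
  linarith

theorem pdist_convex_minkowski (C₁ C₂ D : Set E2)
    (h₁ : IsConvexBody C₁) (h₂ : IsConvexBody C₂) (hD : IsConvexBody D)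
    (t : ℝ) (ht₀ : 0 ≤ t) (ht₁ : t ≤ 1)
    (n₁ n₂ nD n : ℝ → E2)
    (hn₁ : IsNormalSel C₁ n₁) (hn₂ : IsNormalSel C₂ n₂) (hnD : IsNormalSel D nD)
    (hn : IsNormalSel (t • C₁ + (1 - t) • C₂) n) :
    pdistN n nD ≤ t * pdistN n₁ nD + (1 - t) * pdistN n₂ nD := by
  have hb₁ := h₁.1.isBounded
  have hb₂ := h₂.1.isBounded
  have hb : Bornology.IsBounded (t • C₁ + (1 - t) • C₂) := (hb₁.smul₀ t).add (hb₂.smul₀ (1 - t))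
  exact pdistN_le_of_ae_inner_rotvec_eq ht₀ ht₁ (hn.intervalIntegrable_inner_rotvec hb _ _)
    (hn₁.intervalIntegrable_inner_rotvec hb₁ _ _) (hn₂.intervalIntegrable_inner_rotvec hb₂ _ _)
    (hnD.intervalIntegrable_inner_rotvec hD.1.isBounded _ _)
    (hn.ae_inner_rotvec_add_smul ht₀ (sub_nonneg.2 ht₁) hn₁ hn₂ hb₁ hb₂)

end
end

section
/- For a planar convex body D of constant width and a point v in the interior of D, pdist(v, D) < diam(D). -/
/-
Every point `x` of `D` lies on some normal line `ℓ_θ`, i.e. on the double normal from `n θ`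
to `n (θ + π) = n θ + w • uvec θ`. The signed distance to the supporting line in direction `θ`
has derivative minus the signed distance to `ℓ_θ`, so integrating over a half-turn gives
`pdist (n α) = w` for every normal point. Since `pdist` is convex, `pdist ≤ w` on `D`.
An interior point `v ∈ ℓ_θ` is the midpoint of two points of `D` on opposite sides of `ℓ_θ`,
where the convexity inequality is strict; finally `w ≤ diam D`.
-/

open MeasureTheory Real Set

open Filter Topology Asymptotics
open scoped RealInnerProductSpace

noncomputable section

lemma E2.inner_eq (x y : E2) : ⟪x, y⟫ = x 0 * y 0 + x 1 * y 1 := by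
  simp [PiLp.inner_apply, Fin.sum_univ_two]; ring

lemma norm_uvec (θ : ℝ) : ‖uvec θ‖ = 1 := by
  simp [EuclideanSpace.norm_eq, uvec, Fin.sum_univ_two]

lemma norm_rotvec (θ : ℝ) : ‖rotvec θ‖ = 1 := by
  simp [EuclideanSpace.norm_eq, rotvec, Fin.sum_univ_two, add_comm]

lemma inner_rotvec_self (θ : ℝ) : ⟪rotvec θ, rotvec θ⟫ = 1 := by
  rw [real_inner_self_eq_norm_sq, norm_rotvec, one_pow]

lemma inner_uvec_self (θ : ℝ) : ⟪uvec θ, uvec θ⟫ = 1 := by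
  rw [real_inner_self_eq_norm_sq, norm_uvec, one_pow]

lemma inner_uvec_rotvec_self (θ : ℝ) : ⟪uvec θ, rotvec θ⟫ = 0 := by
  simp [E2.inner_eq, uvec, rotvec]; ring

lemma uvec_add_pi (θ : ℝ) : uvec (θ + π) = -uvec θ := by
  ext i; fin_cases i <;> simp [uvec, cos_add_pi, sin_add_pi]

lemma rotvec_add_pi (θ : ℝ) : rotvec (θ + π) = -rotvec θ := by
  ext i; fin_cases i <;> simp [rotvec, cos_add_pi, sin_add_pi]

lemma eq_inner_uvec_smul_add (y : E2) (θ : ℝ) :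
    y = ⟪y, uvec θ⟫ • uvec θ + ⟪y, rotvec θ⟫ • rotvec θ := by
  ext i; fin_cases i <;> simp [E2.inner_eq, uvec, rotvec] <;>
    linear_combination (-_) * sin_sq_add_cos_sq θ

lemma inner_uvec_eq (y : E2) (θ φ : ℝ) :
    ⟪y, uvec φ⟫ = ⟪y, uvec θ⟫ * cos (θ - φ) + ⟪y, rotvec θ⟫ * sin (θ - φ) := by
  simp only [E2.inner_eq, uvec, rotvec, cos_sub, sin_sub, Matrix.cons_val_zero,
    Matrix.cons_val_one]
  linear_combination -(y 0 * cos φ + y 1 * sin φ) * sin_sq_add_cos_sq θ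

lemma hasDerivAt_uvec (θ : ℝ) : HasDerivAt uvec (-rotvec θ) θ := by
  have hu : uvec = fun φ => cos φ • (EuclideanSpace.single 0 1 : E2) +
      sin φ • (EuclideanSpace.single 1 1 : E2) := by
    funext φ; ext i; fin_cases i <;> simp [uvec]
  rw [hu]
  refine (((hasDerivAt_cos θ).smul_const _).add ((hasDerivAt_sin θ).smul_const _)).congr_deriv ?_
  ext i; fin_cases i <;> simp [rotvec]

lemma continuous_uvec : Continuous uvec :=
  continuous_iff_continuousAt.2 fun θ => (hasDerivAt_uvec θ).continuousAt

lemma continuous_rotvec : Continuous rotvec := by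
  have h : rotvec = fun θ => uvec (θ - π / 2) := by
    funext θ; ext i; fin_cases i <;> simp [uvec, rotvec, cos_sub_pi_div_two, sin_sub_pi_div_two]
  rw [h]; exact continuous_uvec.comp (continuous_sub_right _)

section Width

variable {D : Set E2} {w : ℝ} {n : ℝ → E2}

lemma ConstantWidth.inner_sub_le (hD : Bornology.IsBounded D) (hw : ConstantWidth D w)
    {x y : E2} (hx : x ∈ D) (hy : y ∈ D) {d : E2} (hd : ‖d‖ = 1) : ⟪x - y, d⟫ ≤ w := by
  have hb : Bornology.IsBounded ((fun z => ⟪z, d⟫) '' D) :=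
    ((innerSL ℝ d).lipschitz.isBounded_image hD).subset (by
      rintro _ ⟨z, hz, rfl⟩; exact ⟨z, hz, (real_inner_comm d z).symm⟩)
  rw [← hw d hd, inner_sub_left]
  exact sub_le_sub (le_csSup hb.bddAbove ⟨x, hx, rfl⟩) (csInf_le hb.bddBelow ⟨y, hy, rfl⟩)

lemma ConstantWidth.norm_sub_le (hD : Bornology.IsBounded D) (hw : ConstantWidth D w)
    {x y : E2} (hx : x ∈ D) (hy : y ∈ D) : ‖x - y‖ ≤ w := by
  rcases eq_or_ne x y with rfl | hxy
  · simpa using hw.inner_sub_le hD hx hx (norm_uvec 0)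
  have hpos : 0 < ‖x - y‖ := norm_pos_iff.2 (sub_ne_zero.2 hxy)
  have h := hw.inner_sub_le hD hx hy (d := ‖x - y‖⁻¹ • (x - y)) (by
    rw [norm_smul, norm_inv, norm_norm, inv_mul_cancel₀ hpos.ne'])
  rwa [real_inner_smul_right, real_inner_self_eq_norm_sq, sq, ← mul_assoc,
    inv_mul_cancel₀ hpos.ne', one_mul] at h

lemma IsNormalSel.inner_sub_add_pi (hn : IsNormalSel D n) (hw : ConstantWidth D w) (θ : ℝ) :
    ⟪n (θ + π) - n θ, uvec θ⟫ = w := by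
  have hleast : IsLeast ((fun z => ⟪z, uvec θ⟫) '' D) ⟪n θ, uvec θ⟫ :=
    ⟨⟨n θ, (hn θ).1, rfl⟩, by rintro _ ⟨z, hz, rfl⟩; exact (hn θ).2 z hz⟩
  have hgreatest : IsGreatest ((fun z => ⟪z, uvec θ⟫) '' D) ⟪n (θ + π), uvec θ⟫ := by
    refine ⟨⟨n (θ + π), (hn (θ + π)).1, rfl⟩, ?_⟩
    rintro _ ⟨z, hz, rfl⟩
    simpa [uvec_add_pi] using (hn (θ + π)).2 z hz
  rw [inner_sub_left, ← hw (uvec θ) (norm_uvec θ), hgreatest.csSup_eq, hleast.csInf_eq]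

lemma IsNormalSel.add_pi (hn : IsNormalSel D n) (hD : Bornology.IsBounded D)
    (hw : ConstantWidth D w) (θ : ℝ) : n (θ + π) = n θ + w • uvec θ := by
  set c := n (θ + π) - n θ with hc_def
  have hcu : ⟪c, uvec θ⟫ = w := hn.inner_sub_add_pi hw θ
  have hcw : ‖c‖ ≤ w := hw.norm_sub_le hD (hn _).1 (hn _).1
  have hcs : ⟪c, uvec θ⟫ ≤ ‖c‖ * ‖uvec θ‖ := real_inner_le_norm c (uvec θ)
  rw [norm_uvec, mul_one] at hcs
  have hc : ‖c‖ = w := by linarith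
  have := inner_eq_norm_mul_iff_real.1 (show ⟪c, uvec θ⟫ = ‖c‖ * ‖uvec θ‖ by
    rw [norm_uvec, mul_one]; linarith)
  rw [norm_uvec, one_smul, hc] at this
  rw [← this, hc_def]; abel

lemma IsNormalSel.norm_sub_le (hn : IsNormalSel D n) (hD : Bornology.IsBounded D)
    (hw : ConstantWidth D w) (θ τ : ℝ) : ‖n τ - n θ‖ ≤ w * ‖uvec τ - uvec θ‖ := by
  set c := n τ - n θ with hc_def
  have hw0 : 0 ≤ w := (norm_nonneg _).trans (hw.norm_sub_le hD (hn θ).1 (hn θ).1)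
  have h₁ : ‖c - w • uvec θ‖ ≤ w := by
    have : c - w • uvec θ = n τ - n (θ + π) := by rw [hn.add_pi hD hw, hc_def]; abel
    rw [this]; exact hw.norm_sub_le hD (hn _).1 (hn _).1
  have h₂ : ‖c + w • uvec τ‖ ≤ w := by
    have : c + w • uvec τ = n (τ + π) - n θ := by rw [hn.add_pi hD hw, hc_def]; abel
    rw [this]; exact hw.norm_sub_le hD (hn _).1 (hn _).1
  have hsq : ‖c‖ ^ 2 ≤ w * ⟪c, uvec θ - uvec τ⟫ := by
    rw [← sq_le_sq₀ (norm_nonneg _) hw0, norm_sub_sq_real] at h₁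
    rw [← sq_le_sq₀ (norm_nonneg _) hw0, norm_add_sq_real] at h₂
    simp only [real_inner_smul_right, norm_smul, norm_uvec, Real.norm_eq_abs, mul_one,
      sq_abs] at h₁ h₂
    rw [inner_sub_right]; linarith
  have hcs : ⟪c, uvec θ - uvec τ⟫ ≤ ‖c‖ * ‖uvec τ - uvec θ‖ := by
    rw [norm_sub_rev (uvec τ)]; exact real_inner_le_norm _ _
  have hmul : ‖c‖ * ‖c‖ ≤ ‖c‖ * (w * ‖uvec τ - uvec θ‖) := by
    nlinarith [mul_le_mul_of_nonneg_left hcs hw0]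
  rcases (norm_nonneg c).eq_or_lt with h | h
  · rw [← h]; positivity
  · exact le_of_mul_le_mul_left hmul h

lemma IsNormalSel.continuous (hn : IsNormalSel D n) (hD : Bornology.IsBounded D)
    (hw : ConstantWidth D w) : Continuous n := by
  refine continuous_iff_continuousAt.2 fun θ => tendsto_iff_norm_sub_tendsto_zero.2 ?_
  have hu : Tendsto (fun τ => w * ‖uvec τ - uvec θ‖) (𝓝 θ) (𝓝 0) := by
    simpa using ((continuous_uvec.tendsto θ).sub_const (uvec θ)).norm.const_mul w
  exact squeeze_zero (fun _ => norm_nonneg _) (fun τ => hn.norm_sub_le hD hw θ τ) hu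

lemma IsNormalSel.width_le_diam (hn : IsNormalSel D n) (hD : Bornology.IsBounded D)
    (hw : ConstantWidth D w) : w ≤ Metric.diam D :=
  calc w ≤ ‖w • uvec 0‖ := by rw [norm_smul, norm_uvec, mul_one]; exact le_abs_self w
    _ = dist (n (0 + π)) (n 0) := by rw [hn.add_pi hD hw, dist_eq_norm, add_sub_cancel_left]
    _ ≤ Metric.diam D := Metric.dist_le_diam_of_mem hD (hn _).1 (hn _).1

end Width

def supportDist (n : ℝ → E2) (x : E2) (θ : ℝ) : ℝ := ⟪x - n θ, uvec θ⟫

/-- Signed distance from `x` to the normal line `ℓ_θ` through `n θ` in direction `uvec θ`. -/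
def normalDist (n : ℝ → E2) (x : E2) (θ : ℝ) : ℝ := ⟪x - n θ, rotvec θ⟫

def pdist (n : ℝ → E2) (x : E2) : ℝ := ∫ θ in (0 : ℝ)..π, |normalDist n x θ|

section NormalSelection

variable {D : Set E2} {w : ℝ} {n : ℝ → E2}

lemma supportDist_nonneg (hn : IsNormalSel D n) {x : E2} (hx : x ∈ D) (θ : ℝ) :
    0 ≤ supportDist n x θ := by
  rw [supportDist, inner_sub_left, sub_nonneg]; exact (hn θ).2 x hx

lemma supportDist_add_pi (hopp : ∀ θ, n (θ + π) = n θ + w • uvec θ) (x : E2) (θ : ℝ) :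
    supportDist n x (θ + π) = w - supportDist n x θ := by
  simp only [supportDist, hopp, uvec_add_pi, inner_neg_right, ← sub_sub, inner_sub_left,
    real_inner_smul_left, inner_uvec_self]
  ring

lemma normalDist_add_pi (hopp : ∀ θ, n (θ + π) = n θ + w • uvec θ) (x : E2) (θ : ℝ) :
    normalDist n x (θ + π) = -normalDist n x θ := by
  simp only [normalDist, hopp, rotvec_add_pi, inner_neg_right, ← sub_sub, inner_sub_left,
    real_inner_smul_left, inner_uvec_rotvec_self]
  ring

lemma continuous_normalDist (hcn : Continuous n) (x : E2) : Continuous (normalDist n x) :=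
  (continuous_const.sub hcn).inner continuous_rotvec

/-- The increment of the support function `τ ↦ ⟪n τ, uvec τ⟫` is squeezed between
`⟪n τ, uvec τ - uvec θ⟫` and `⟪n θ, uvec τ - uvec θ⟫`, whose gap is
`≤ ‖n τ - n θ‖ * ‖uvec τ - uvec θ‖ = o(τ - θ)`. -/
lemma IsNormalSel.hasDerivAt_inner (hn : IsNormalSel D n) {θ : ℝ} (hcn : ContinuousAt n θ) :
    HasDerivAt (fun τ => ⟪n τ, uvec τ⟫) (-⟪n θ, rotvec θ⟫) θ := by
  have hg : HasDerivAt (fun τ => ⟪n θ, uvec τ⟫) (-⟪n θ, rotvec θ⟫) θ := by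
    simpa using (hasDerivAt_const θ (n θ)).inner ℝ (hasDerivAt_uvec θ)
  have hbound :
      ∀ τ, ‖⟪n τ, uvec τ⟫ - ⟪n θ, uvec τ⟫‖ ≤ ‖n τ - n θ‖ * ‖uvec τ - uvec θ‖ := by
    intro τ
    have hle : ⟪n τ, uvec τ⟫ ≤ ⟪n θ, uvec τ⟫ := (hn τ).2 _ (hn θ).1
    have hge : ⟪n θ, uvec θ⟫ ≤ ⟪n τ, uvec θ⟫ := (hn θ).2 _ (hn τ).1
    have hcs := neg_le_of_abs_le (abs_real_inner_le_norm (n τ - n θ) (uvec τ - uvec θ))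
    simp only [inner_sub_left, inner_sub_right] at hcs
    rw [Real.norm_eq_abs, abs_le]
    constructor <;> linarith
  have hsmall :
      (fun τ => ‖n τ - n θ‖ * ‖uvec τ - uvec θ‖) =o[𝓝 θ] fun τ => τ - θ := by
    have h₁ : (fun τ => ‖n τ - n θ‖) =o[𝓝 θ] fun _ => (1 : ℝ) :=
      (isLittleO_one_iff ℝ).2 (tendsto_iff_norm_sub_tendsto_zero.1 hcn)
    simpa using h₁.mul_isBigO (hasDerivAt_uvec θ).isBigO_sub.norm_left
  rw [hasDerivAt_iff_isLittleO] at hg ⊢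
  refine (hg.add ((isBigO_of_le _ fun τ => (hbound τ).trans (Real.le_norm_self _)).trans_isLittleO
    hsmall)).congr_left fun τ => ?_
  simp only [smul_eq_mul]; ring

lemma IsNormalSel.hasDerivAt_supportDist (hn : IsNormalSel D n) (hcn : Continuous n) (x : E2)
    (θ : ℝ) : HasDerivAt (supportDist n x) (-normalDist n x θ) θ := by
  have hx : HasDerivAt (fun τ => ⟪x, uvec τ⟫) (-⟪x, rotvec θ⟫) θ := by
    simpa using (hasDerivAt_const θ x).inner ℝ (hasDerivAt_uvec θ)
  have hf : supportDist n x = fun τ => ⟪x, uvec τ⟫ - ⟪n τ, uvec τ⟫ :=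
    funext fun τ => inner_sub_left _ _ _
  rw [hf]
  refine (hx.sub (hn.hasDerivAt_inner hcn.continuousAt)).congr_deriv ?_
  rw [normalDist, inner_sub_left]; ring

lemma IsNormalSel.integral_normalDist (hn : IsNormalSel D n) (hcn : Continuous n) (x : E2)
    (α β : ℝ) :
    ∫ θ in α..β, normalDist n x θ = supportDist n x α - supportDist n x β := by
  have h := intervalIntegral.integral_eq_sub_of_hasDerivAt (f := -supportDist n x)
    (fun θ _ => by simpa using (hn.hasDerivAt_supportDist hcn x θ).neg)
    ((continuous_normalDist hcn x).intervalIntegrable α β)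
  rw [h, Pi.neg_apply, Pi.neg_apply]; ring

lemma IsNormalSel.normalDist_nonpos (hn : IsNormalSel D n)
    (hopp : ∀ θ, n (θ + π) = n θ + w • uvec θ) {α θ : ℝ} (hθ : θ ∈ Icc α (α + π)) :
    normalDist n (n α) θ ≤ 0 := by
  obtain ⟨h₁, h₂⟩ := hθ
  rcases h₁.eq_or_lt with rfl | h₁
  · simp [normalDist]
  rcases h₂.eq_or_lt with rfl | h₂
  · rw [normalDist_add_pi hopp]; simp [normalDist]
  -- `⟪n α - n φ, uvec α⟫ ≤ 0` in the frame at `φ`; taking `φ = θ` and `φ = θ + π` controls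
  -- the sign of `normalDist` whatever the sign of `cos (θ - α)`
  have hside : ∀ φ,
      supportDist n (n α) φ * cos (φ - α) + normalDist n (n α) φ * sin (φ - α) ≤ 0 := by
    intro φ
    rw [supportDist, normalDist, ← inner_uvec_eq, inner_sub_left, sub_nonpos]
    exact (hn α).2 _ (hn φ).1
  have h₃ := hside θ
  have h₄ := hside (θ + π)
  rw [supportDist_add_pi hopp, normalDist_add_pi hopp, add_sub_right_comm, cos_add_pi,
    sin_add_pi] at h₄
  have hP := supportDist_nonneg hn (hn α).1 θ
  have hP' := supportDist_nonneg hn (hn α).1 (θ + π)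
  rw [supportDist_add_pi hopp] at hP'
  have hsin : 0 < sin (θ - α) := sin_pos_of_pos_of_lt_pi (by linarith) (by linarith)
  rcases le_total 0 (cos (θ - α)) with hcos | hcos
  · nlinarith [mul_nonneg hP hcos]
  · nlinarith [mul_nonneg hP' (neg_nonneg.2 hcos)]

lemma integral_abs_normalDist_add_pi (hopp : ∀ θ, n (θ + π) = n θ + w • uvec θ) (x : E2)
    (α : ℝ) : ∫ θ in α..α + π, |normalDist n x θ| = pdist n x := by
  have hper : Function.Periodic (fun θ => |normalDist n x θ|) π := fun θ => by
    simp [normalDist_add_pi hopp]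
  rw [hper.intervalIntegral_add_eq α 0, zero_add, pdist]

lemma IsNormalSel.pdist_eq (hn : IsNormalSel D n) (hcn : Continuous n)
    (hopp : ∀ θ, n (θ + π) = n θ + w • uvec θ) (α : ℝ) : pdist n (n α) = w := by
  rw [← integral_abs_normalDist_add_pi hopp _ α]
  calc ∫ θ in α..α + π, |normalDist n (n α) θ|
      = ∫ θ in α..α + π, -normalDist n (n α) θ := by
        refine intervalIntegral.integral_congr fun θ hθ => abs_of_nonpos ?_
        rw [uIcc_of_le (by linarith [pi_pos])] at hθ
        exact hn.normalDist_nonpos hopp hθ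
    _ = w := by
        rw [intervalIntegral.integral_neg, hn.integral_normalDist hcn, supportDist_add_pi hopp]
        simp [supportDist]

end NormalSelection

section Convexity

variable {n : ℝ → E2}

lemma normalDist_smul_add_smul (x y : E2) {p q : ℝ} (hpq : p + q = 1) (θ : ℝ) :
    normalDist n (p • x + q • y) θ = p * normalDist n x θ + q * normalDist n y θ := by
  have h : p • x + q • y - n θ = p • (x - n θ) + q • (y - n θ) := by
    linear_combination (norm := module) hpq • n θ
  rw [normalDist, h, inner_add_left, real_inner_smul_left, real_inner_smul_left]; rfl

lemma abs_normalDist_smul_add_smul_le (x y : E2) {p q : ℝ} (hp : 0 ≤ p) (hq : 0 ≤ q)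
    (hpq : p + q = 1) (θ : ℝ) :
    |normalDist n (p • x + q • y) θ| ≤ p * |normalDist n x θ| + q * |normalDist n y θ| := by
  rw [normalDist_smul_add_smul x y hpq]
  exact (abs_add_le _ _).trans_eq (by rw [abs_mul, abs_mul, abs_of_nonneg hp, abs_of_nonneg hq])

lemma convexOn_pdist (hcn : Continuous n) : ConvexOn ℝ univ (pdist n) := by
  refine ⟨convex_univ, fun x _ y _ p q hp hq hpq => ?_⟩
  have hint : ∀ z, IntervalIntegrable (fun θ => |normalDist n z θ|) volume 0 π :=
    fun z => (continuous_normalDist hcn z).abs.intervalIntegrable 0 π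
  simp only [pdist, smul_eq_mul, ← intervalIntegral.integral_const_mul]
  rw [← intervalIntegral.integral_add ((hint x).const_mul p) ((hint y).const_mul q)]
  exact intervalIntegral.integral_mono_on pi_pos.le (hint _)
    (((hint x).const_mul p).add ((hint y).const_mul q))
    fun θ _ => abs_normalDist_smul_add_smul_le x y hp hq hpq θ

lemma pdist_smul_add_smul_lt (hcn : Continuous n) {x y : E2} {p q : ℝ} (hp : 0 < p) (hq : 0 < q)
    (hpq : p + q = 1) {θ : ℝ} (hθ : θ ∈ Icc 0 π) (hx : normalDist n x θ < 0)
    (hy : 0 < normalDist n y θ) :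
    pdist n (p • x + q • y) < p * pdist n x + q * pdist n y := by
  have hint : ∀ z, IntervalIntegrable (fun θ => |normalDist n z θ|) volume 0 π :=
    fun z => (continuous_normalDist hcn z).abs.intervalIntegrable 0 π
  simp only [pdist, ← intervalIntegral.integral_const_mul]
  rw [← intervalIntegral.integral_add ((hint x).const_mul p) ((hint y).const_mul q)]
  refine intervalIntegral.integral_lt_integral_of_continuousOn_of_le_of_exists_lt pi_pos
    (continuous_normalDist hcn _).abs.continuousOn
    ((continuous_const.mul (continuous_normalDist hcn x).abs).add
      (continuous_const.mul (continuous_normalDist hcn y).abs)).continuousOn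
    (fun φ _ => abs_normalDist_smul_add_smul_le x y hp.le hq.le hpq φ) ⟨θ, hθ, ?_⟩
  rw [normalDist_smul_add_smul x y hpq, abs_of_neg hx, abs_of_pos hy, abs_lt]
  constructor <;> nlinarith [mul_neg_of_pos_of_neg hp hx, mul_pos hq hy]

end Convexity

section Bounds

variable {D : Set E2} {w : ℝ} {n : ℝ → E2}

lemma normalDist_add_smul_rotvec (x : E2) (s θ : ℝ) :
    normalDist n (x + s • rotvec θ) θ = normalDist n x θ + s := by
  rw [normalDist, add_sub_right_comm, inner_add_left, real_inner_smul_left, inner_rotvec_self,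
    mul_one, ← normalDist]

lemma exists_normalDist_eq_zero (hcn : Continuous n)
    (hopp : ∀ θ, n (θ + π) = n θ + w • uvec θ) (x : E2) : ∃ θ ∈ Icc 0 π, normalDist n x θ = 0 := by
  have hzero : (0 : ℝ) ∈ uIcc (normalDist n x 0) (normalDist n x π) := by
    rw [← zero_add π, normalDist_add_pi hopp, mem_uIcc]
    rcases le_total (normalDist n x 0) 0 with h | h
    · exact Or.inl ⟨h, by linarith⟩
    · exact Or.inr ⟨by linarith, h⟩
  obtain ⟨θ, hθ, h⟩ :=
    intermediate_value_uIcc (continuous_normalDist hcn x).continuousOn hzero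
  exact ⟨θ, uIcc_of_le pi_pos.le ▸ hθ, h⟩

lemma IsNormalSel.pdist_le (hn : IsNormalSel D n) (hD : Bornology.IsBounded D)
    (hw : ConstantWidth D w) (hwpos : 0 < w) {x : E2} (hx : x ∈ D) : pdist n x ≤ w := by
  have hopp := hn.add_pi hD hw
  have hcn := hn.continuous hD hw
  obtain ⟨θ, -, hθ⟩ := exists_normalDist_eq_zero hcn hopp x
  set t := supportDist n x θ
  have ht : 0 ≤ t := supportDist_nonneg hn hx θ
  have htw : t ≤ w := by
    have := supportDist_nonneg hn hx (θ + π)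
    rw [supportDist_add_pi hopp] at this; linarith
  have hxt : x = (1 - t / w) • n θ + (t / w) • n (θ + π) := by
    have h := eq_inner_uvec_smul_add (x - n θ) θ
    rw [← normalDist, hθ, zero_smul, add_zero, ← supportDist] at h
    rw [hopp, smul_add, smul_smul, div_mul_cancel₀ t hwpos.ne', ← h]
    module
  calc pdist n x = pdist n ((1 - t / w) • n θ + (t / w) • n (θ + π)) := by rw [← hxt]
    _ ≤ (1 - t / w) • pdist n (n θ) + (t / w) • pdist n (n (θ + π)) :=
        (convexOn_pdist hcn).2 trivial trivial
          (sub_nonneg.2 ((div_le_one hwpos).2 htw)) (div_nonneg ht hwpos.le) (by ring)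
    _ = w := by simp only [hn.pdist_eq hcn hopp, smul_eq_mul]; ring

lemma IsNormalSel.pdist_lt (hn : IsNormalSel D n) (hD : Bornology.IsBounded D)
    (hw : ConstantWidth D w) {v : E2} {θ : ℝ} (hθ : θ ∈ Icc 0 π)
    (hvθ : normalDist n v θ = 0) {s : ℝ} (hs : 0 < s) (hm : v - s • rotvec θ ∈ D)
    (hp : v + s • rotvec θ ∈ D) :
    pdist n v < w := by
  have hwpos : 0 < w := by
    have h := hw.norm_sub_le hD hp hm
    rw [add_sub_sub_cancel, ← two_smul ℝ, smul_smul, norm_smul, norm_rotvec, mul_one,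
      Real.norm_of_nonneg (by positivity)] at h
    linarith
  have hm' : normalDist n (v - s • rotvec θ) θ < 0 := by
    rw [sub_eq_add_neg, ← neg_smul, normalDist_add_smul_rotvec, hvθ]; linarith
  have hp' : 0 < normalDist n (v + s • rotvec θ) θ := by
    rw [normalDist_add_smul_rotvec, hvθ]; linarith
  set a := v - s • rotvec θ with ha
  set b := v + s • rotvec θ with hb
  have hmid : (1 / 2 : ℝ) • a + (1 / 2 : ℝ) • b = v := by rw [ha, hb]; module
  calc pdist n v = pdist n ((1 / 2 : ℝ) • a + (1 / 2 : ℝ) • b) := by rw [hmid]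
    _ < 1 / 2 * pdist n a + 1 / 2 * pdist n b :=
        pdist_smul_add_smul_lt (hn.continuous hD hw) (by norm_num) (by norm_num) (by norm_num) hθ
          hm' hp'
    _ ≤ 1 / 2 * w + 1 / 2 * w := by
        gcongr
        exacts [hn.pdist_le hD hw hwpos hm, hn.pdist_le hD hw hwpos hp]
    _ = w := by ring

end Bounds

end

noncomputable section

theorem pdist_of_interior_point (D : Set E2) (hD : IsConvexBody D)
    (w : ℝ) (hw : ConstantWidth D w)
    (n : ℝ → E2) (hn : IsNormalSel D n)
    (v : E2) (hv : v ∈ interior D) :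
    ∫ θ in (0:ℝ)..π, |(inner ℝ (v - n θ) (rotvec θ) : ℝ)| < Metric.diam D := by
  have hb := hD.1.isBounded
  obtain ⟨θ, hθ, hvθ⟩ := exists_normalDist_eq_zero (hn.continuous hb hw) (hn.add_pi hb hw) v
  obtain ⟨ε, hε, hball⟩ := Metric.isOpen_iff.1 isOpen_interior v hv
  have hr : ‖(ε / 2) • rotvec θ‖ < ε := by
    rw [norm_smul, norm_rotvec, mul_one, Real.norm_of_nonneg (half_pos hε).le]
    exact half_lt_self hε
  have hm : v - (ε / 2) • rotvec θ ∈ D :=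
    interior_subset (hball (by rwa [Metric.mem_ball, dist_self_sub_left]))
  have hp : v + (ε / 2) • rotvec θ ∈ D :=
    interior_subset (hball (by rwa [Metric.mem_ball, dist_self_add_left]))
  calc ∫ θ in (0:ℝ)..π, |(inner ℝ (v - n θ) (rotvec θ) : ℝ)| = pdist n v := rfl
    _ < w := hn.pdist_lt hb hw hθ hvθ (half_pos hε) hm hp
    _ ≤ Metric.diam D := hn.width_le_diam hb hw

end
end

section
/- Every planar convex body D is contained in a body D′ of constant width with diam(D′) = diam(D). -/
open MeasureTheory Real Set

noncomputable section

/-!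
By Zorn's lemma `D` lies in a set `M` that is maximal among the sets of diameter at most
`w = diam D`. Such a set is the intersection of the closed balls of radius `w` about its points,
hence a compact convex body of diameter `w`. To compute its width in a unit direction `d`, let `p`
maximise `⟪·, d⟫` on `M`. Points just beyond the supporting line at `p` lie outside `M`, so they are
farther than `w` from some point of `M`; in the limit this gives points `q₁`, `q₂ ∈ M` at distance
`w` from `p` on either side of the normal line through `p`. In the plane, `d` is then a nonnegative
combination of `p - q₁` and `p - q₂`, and combining the inequalities `‖x - qᵢ‖ ≤ w` with the same
weights shows that `p - w • d` is within `w` of every point of `M`, hence lies in `M`.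
-/

open Filter Topology Metric
open scoped RealInnerProductSpace

structure IsDiametricallyComplete {X : Type*} [PseudoMetricSpace X] (M : Set X) (w : ℝ) :
    Prop where
  dist_le : ∀ x ∈ M, ∀ y ∈ M, dist x y ≤ w
  mem_of_forall_dist_le : ∀ y, (∀ x ∈ M, dist y x ≤ w) → y ∈ M

namespace IsDiametricallyComplete

section PseudoMetric

variable {X : Type*} [PseudoMetricSpace X] {M : Set X} {w : ℝ}

theorem exists_superset {A : Set X} (hw : 0 ≤ w) (hA : ∀ x ∈ A, ∀ y ∈ A, dist x y ≤ w) :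
    ∃ M, A ⊆ M ∧ IsDiametricallyComplete M w := by
  set S : Set (Set X) := {B | ∀ x ∈ B, ∀ y ∈ B, dist x y ≤ w}
  have hchain : ∀ c ⊆ S, IsChain (· ⊆ ·) c → c.Nonempty → ∃ ub ∈ S, ∀ s ∈ c, s ⊆ ub := by
    refine fun c hc hchain _ => ⟨⋃₀ c, ?_, fun s hs => subset_sUnion_of_mem hs⟩
    rintro x ⟨s, hs, hxs⟩ y ⟨t, ht, hyt⟩
    rcases hchain.total hs ht with hst | hts
    · exact hc ht x (hst hxs) y hyt
    · exact hc hs x hxs y (hts hyt)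
  obtain ⟨M, hAM, hmax⟩ := zorn_subset_nonempty S hchain A hA
  refine ⟨M, hAM, hmax.prop, fun y hy => hmax.mem_of_prop_insert ?_⟩
  rintro x (hxy | hx) z (hzy | hz)
  · simpa [hxy, hzy] using hw
  · exact hxy ▸ hy z hz
  · exact hzy ▸ dist_comm x y ▸ hy x hx
  · exact hmax.prop x hx z hz

theorem eq_biInter_closedBall (hM : IsDiametricallyComplete M w) :
    M = ⋂ x ∈ M, closedBall x w :=
  Subset.antisymm (fun y hy => mem_iInter₂.2 fun x hx => hM.dist_le y hy x hx)
    fun y hy => hM.mem_of_forall_dist_le y fun x hx => mem_iInter₂.1 hy x hx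

theorem isClosed (hM : IsDiametricallyComplete M w) : IsClosed M := by
  rw [hM.eq_biInter_closedBall]
  exact isClosed_biInter fun x _ => isClosed_closedBall

theorem isBounded (hM : IsDiametricallyComplete M w) : Bornology.IsBounded M :=
  isBounded_iff.2 ⟨w, hM.dist_le⟩

theorem isCompact [ProperSpace X] (hM : IsDiametricallyComplete M w) : IsCompact M :=
  isCompact_of_isClosed_isBounded hM.isClosed hM.isBounded

end PseudoMetric

theorem convex {F : Type*} [SeminormedAddCommGroup F] [NormedSpace ℝ F] {M : Set F} {w : ℝ}
    (hM : IsDiametricallyComplete M w) : Convex ℝ M := by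
  rw [hM.eq_biInter_closedBall]
  exact convex_iInter₂ fun x _ => convex_closedBall x w

section InnerProductSpace

variable {F : Type*} [NormedAddCommGroup F] [InnerProductSpace ℝ F] {M : Set F} {w : ℝ}

theorem exists_dist_eq_inner_nonneg (hM : IsDiametricallyComplete M w) (hc : IsCompact M)
    {p d n : F} (hp : p ∈ M) (hmax : IsMaxOn (⟪·, d⟫) M p) (hd : d ≠ 0) (hnd : 0 ≤ ⟪n, d⟫) :
    ∃ q ∈ M, dist p q = w ∧ 0 ≤ ⟪p - q, n⟫ := by
  set t : ℕ → ℝ := fun k => 1 / (k + 1)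
  set m : ℕ → F := fun k => n + t k • d
  have ht_pos (k : ℕ) : 0 < t k := by positivity
  have ht : Tendsto t atTop (𝓝 0) := tendsto_one_div_add_atTop_nhds_zero_nat
  have hm : Tendsto m atTop (𝓝 n) := by simpa using tendsto_const_nhds.add (ht.smul_const d)
  have hy : Tendsto (fun k => p + t k • m k) atTop (𝓝 p) := by
    simpa using tendsto_const_nhds.add (ht.smul hm)
  -- `p + t • (n + t • d)` lies strictly beyond the supporting hyperplane of `M` at `p`
  have hout (k : ℕ) : ∃ z ∈ M, w < dist (p + t k • m k) z := by
    by_contra! h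
    have hle : ⟪p + t k • m k, d⟫ ≤ ⟪p, d⟫ := hmax (hM.mem_of_forall_dist_le _ h)
    simp only [m, inner_add_left, real_inner_smul_left, real_inner_self_eq_norm_sq] at hle
    have := mul_pos (ht_pos k)
      (add_pos_of_nonneg_of_pos hnd (mul_pos (ht_pos k) (pow_pos (norm_pos_iff.2 hd) 2)))
    linarith
  choose z hzM hz using hout
  obtain ⟨q, hq, φ, hφ, hzq⟩ := hc.tendsto_subseq hzM
  refine ⟨q, hq, le_antisymm (hM.dist_le p hp q hq) ?_, ?_⟩
  · exact ge_of_tendsto ((hy.comp hφ.tendsto_atTop).dist hzq)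
      (Eventually.of_forall fun k => (hz (φ k)).le)
  · have hpos (k : ℕ) : 0 < 2 * ⟪p - z k, m k⟫ + t k * ‖m k‖ ^ 2 := by
      have hfar := hz k
      have hnear := hM.dist_le p hp (z k) (hzM k)
      rw [dist_eq_norm, show p + t k • m k - z k = (p - z k) + t k • m k by abel] at hfar
      rw [dist_eq_norm] at hnear
      have hexp := norm_add_sq_real (p - z k) (t k • m k)
      rw [real_inner_smul_right, norm_smul, Real.norm_of_nonneg (ht_pos k).le] at hexp
      have : 0 < t k * (2 * ⟪p - z k, m k⟫ + t k * ‖m k‖ ^ 2) := by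
        nlinarith [norm_nonneg (p - z k)]
      exact pos_of_mul_pos_right this (ht_pos k).le
    have hlim : Tendsto (fun k => 2 * ⟪p - z (φ k), m (φ k)⟫ + t (φ k) * ‖m (φ k)‖ ^ 2) atTop
        (𝓝 (2 * ⟪p - q, n⟫ + 0 * ‖n‖ ^ 2)) :=
      (((tendsto_const_nhds.sub hzq).inner (hm.comp hφ.tendsto_atTop)).const_mul 2).add
        ((ht.comp hφ.tendsto_atTop).mul ((hm.comp hφ.tendsto_atTop).norm.pow 2))
    have := ge_of_tendsto' hlim fun k => (hpos (φ k)).le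
    linarith

theorem sub_smul_mem (hM : IsDiametricallyComplete M w) {p q₁ q₂ d : F} {α β c : ℝ}
    (hq₁ : q₁ ∈ M) (hq₂ : q₂ ∈ M) (h₁ : dist p q₁ = w) (h₂ : dist p q₂ = w)
    (hα : 0 ≤ α) (hβ : 0 ≤ β) (hc : 0 < c) (hd : ‖d‖ = 1)
    (h : α • (p - q₁) + β • (p - q₂) = c • d) : p - w • d ∈ M := by
  refine hM.mem_of_forall_dist_le _ fun x hx => ?_
  have hw : 0 ≤ w := h₁ ▸ dist_nonneg
  have hpartner : ∀ q ∈ M, dist p q = w → ‖p - x‖ ^ 2 ≤ 2 * ⟪p - x, p - q⟫ := by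
    intro q hq hpq
    have hxq := hM.dist_le x hx q hq
    rw [dist_eq_norm] at hxq hpq
    have hexp := norm_sub_sq_real (p - q) (p - x)
    rw [sub_sub_sub_cancel_left, hpq, real_inner_comm] at hexp
    nlinarith [norm_nonneg (x - q)]
  have hcw : c ≤ (α + β) * w :=
    calc c = ‖α • (p - q₁) + β • (p - q₂)‖ := by
          rw [h, norm_smul, hd, Real.norm_of_nonneg hc.le, mul_one]
      _ ≤ ‖α • (p - q₁)‖ + ‖β • (p - q₂)‖ := norm_add_le _ _
      _ = (α + β) * w := by
          rw [norm_smul, norm_smul, ← dist_eq_norm, ← dist_eq_norm, h₁, h₂,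
            Real.norm_of_nonneg hα, Real.norm_of_nonneg hβ, add_mul]
  have hcone : (α + β) * ‖p - x‖ ^ 2 ≤ 2 * c * ⟪p - x, d⟫ := by
    have hinner := congrArg (⟪p - x, ·⟫) h
    simp only [inner_add_right, real_inner_smul_right] at hinner
    nlinarith [hpartner q₁ hq₁ h₁, hpartner q₂ hq₂ h₂]
  have hball : ‖p - x‖ ^ 2 ≤ 2 * w * ⟪p - x, d⟫ := by
    have := mul_le_mul_of_nonneg_right hcw (sq_nonneg ‖p - x‖)
    refine le_of_mul_le_mul_left ?_ hc
    nlinarith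
  rw [dist_eq_norm, show p - w • d - x = (p - x) - w • d by abel,
    ← sq_le_sq₀ (norm_nonneg _) hw, norm_sub_sq_real, norm_smul, hd, real_inner_smul_right,
    Real.norm_of_nonneg hw]
  nlinarith

end InnerProductSpace

end IsDiametricallyComplete

def perp (d : E2) : E2 := WithLp.toLp 2 ![d 1, -d 0]

theorem inner_perp_self (d : E2) : ⟪perp d, d⟫ = 0 := by
  simp [perp, PiLp.inner_apply, Fin.sum_univ_two]
  ring

theorem norm_perp (d : E2) : ‖perp d‖ = ‖d‖ := by
  simp [perp, EuclideanSpace.norm_eq, Fin.sum_univ_two, add_comm]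

theorem eq_inner_perp_smul_add_inner_smul {d : E2} (hd : ‖d‖ = 1) (x : E2) :
    x = ⟪x, perp d⟫ • perp d + ⟪x, d⟫ • d := by
  have hd2 : d 0 ^ 2 + d 1 ^ 2 = 1 := by
    simpa [EuclideanSpace.norm_eq, Fin.sum_univ_two, Real.sqrt_eq_one] using hd
  ext i
  fin_cases i <;> simp [perp, PiLp.inner_apply, Fin.sum_univ_two] <;>
    linear_combination (-x _) * hd2

theorem exists_nonneg_smul_add_smul_eq_pos_smul {d v₁ v₂ : E2} {w : ℝ} (hd : ‖d‖ = 1)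
    (h₁ : ‖v₁‖ = w) (h₂ : ‖v₂‖ = w) (h₁₂ : ‖v₁ - v₂‖ < 2 * w)
    (hv₁d : 0 ≤ ⟪v₁, d⟫) (hv₂d : 0 ≤ ⟪v₂, d⟫) (hv₁ : 0 ≤ ⟪v₁, perp d⟫) (hv₂ : ⟪v₂, perp d⟫ ≤ 0) :
    ∃ α β c : ℝ, 0 ≤ α ∧ 0 ≤ β ∧ 0 < c ∧ α • v₁ + β • v₂ = c • d := by
  have hw : 0 < w := by linarith [norm_nonneg (v₁ - v₂)]
  have hdd : ⟪d, d⟫ = 1 := by rw [real_inner_self_eq_norm_sq, hd, one_pow]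
  obtain ⟨a₁, b₁, rfl⟩ : ∃ a b : ℝ, v₁ = a • perp d + b • d :=
    ⟨_, _, eq_inner_perp_smul_add_inner_smul hd v₁⟩
  obtain ⟨a₂, b₂, rfl⟩ : ∃ a b : ℝ, v₂ = a • perp d + b • d :=
    ⟨_, _, eq_inner_perp_smul_add_inner_smul hd v₂⟩
  have hrr : ⟪perp d, perp d⟫ = 1 := by rw [real_inner_self_eq_norm_sq, norm_perp, hd, one_pow]
  have hdr : ⟪d, perp d⟫ = 0 := by rw [real_inner_comm, inner_perp_self]
  simp only [inner_add_left, real_inner_smul_left, inner_perp_self, hdd, hrr, hdr, mul_zero,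
    mul_one, add_zero, zero_add] at hv₁d hv₂d hv₁ hv₂
  have hsq (a b : ℝ) : ‖a • perp d + b • d‖ ^ 2 = a ^ 2 + b ^ 2 := by
    rw [← real_inner_self_eq_norm_sq]
    simp only [inner_add_left, inner_add_right, real_inner_smul_left, real_inner_smul_right, hrr,
      hdd, hdr, inner_perp_self]
    ring
  replace h₁ := congrArg (· ^ 2) h₁
  replace h₂ := congrArg (· ^ 2) h₂
  rw [show a₁ • perp d + b₁ • d - (a₂ • perp d + b₂ • d) = (a₁ - a₂) • perp d + (b₁ - b₂) • d by
    module, ← sq_lt_sq₀ (norm_nonneg _) (by positivity)] at h₁₂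
  simp only [hsq] at h₁ h₂ h₁₂
  rcases hv₁.eq_or_lt with rfl | ha₁
  · exact ⟨1, 0, b₁, zero_le_one, le_rfl, by nlinarith, by module⟩
  rcases hv₂.eq_or_lt with rfl | ha₂
  · exact ⟨0, 1, b₂, le_rfl, zero_le_one, by nlinarith, by module⟩
  refine ⟨-a₂, a₁, a₁ * b₂ - a₂ * b₁, by linarith, ha₁.le, ?_, by module⟩
  -- otherwise `b₁ = b₂ = 0`, so `v₁ = w • perp d = -v₂`
  by_contra! hD
  obtain rfl : b₁ = 0 := by nlinarith [mul_nonneg ha₁.le hv₂d, mul_nonneg (neg_nonneg.2 hv₂) hv₁d]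
  obtain rfl : b₂ = 0 := by nlinarith [mul_nonneg ha₁.le hv₂d]
  obtain rfl : a₁ = w := by nlinarith
  obtain rfl : a₂ = -a₁ := by nlinarith
  nlinarith

theorem sSup_sub_sInf_inner_eq {F : Type*} [NormedAddCommGroup F] [InnerProductSpace ℝ F]
    {M : Set F} {w : ℝ} {p d : F} (hpair : ∀ x ∈ M, ∀ y ∈ M, dist x y ≤ w) (hd : ‖d‖ = 1)
    (hp : p ∈ M) (hmax : IsMaxOn (⟪·, d⟫) M p) (hq : p - w • d ∈ M) :
    sSup ((fun x => ⟪x, d⟫) '' M) - sInf ((fun x => ⟪x, d⟫) '' M) = w := by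
  have hsup : IsGreatest ((fun x => ⟪x, d⟫) '' M) ⟪p, d⟫ :=
    ⟨mem_image_of_mem _ hp, forall_mem_image.2 fun x hx => hmax hx⟩
  have hinf : IsLeast ((fun x => ⟪x, d⟫) '' M) (⟪p, d⟫ - w) := by
    refine ⟨⟨_, hq, ?_⟩, forall_mem_image.2 fun x hx => ?_⟩
    · simp [inner_sub_left, real_inner_smul_left, hd]
    · have := real_inner_le_norm (p - x) d
      rw [hd, mul_one, ← dist_eq_norm, inner_sub_left] at this
      linarith [hpair p hp x hx]
  rw [hsup.csSup_eq, hinf.csInf_eq]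
  ring

namespace IsDiametricallyComplete

variable {M : Set E2} {w : ℝ}

theorem exists_isMaxOn_inner_sub_smul_mem (hM : IsDiametricallyComplete M w) (hne : M.Nonempty)
    (hw : 0 < w) {d : E2} (hd : ‖d‖ = 1) :
    ∃ p ∈ M, IsMaxOn (⟪·, d⟫) M p ∧ p - w • d ∈ M := by
  obtain ⟨p, hp, hmax⟩ :=
    hM.isCompact.exists_isMaxOn hne (by fun_prop : Continuous (⟪·, d⟫)).continuousOn
  have hd₀ : d ≠ 0 := norm_ne_zero_iff.1 (hd ▸ one_ne_zero)
  obtain ⟨q₁, hq₁, h₁, hq₁r⟩ := hM.exists_dist_eq_inner_nonneg hM.isCompact hp hmax hd₀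
    (n := perp d) (inner_perp_self d).ge
  obtain ⟨q₂, hq₂, h₂, hq₂r⟩ := hM.exists_dist_eq_inner_nonneg hM.isCompact hp hmax hd₀
    (n := -perp d) (by rw [inner_neg_left, inner_perp_self, neg_zero])
  have hqd {q : E2} (hq : q ∈ M) : 0 ≤ ⟪p - q, d⟫ := by
    rw [inner_sub_left, sub_nonneg]
    exact hmax hq
  obtain ⟨α, β, c, hα, hβ, hc, h⟩ := exists_nonneg_smul_add_smul_eq_pos_smul hd
    (v₁ := p - q₁) (v₂ := p - q₂) (by rw [← dist_eq_norm, h₁]) (by rw [← dist_eq_norm, h₂])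
    (by rw [sub_sub_sub_cancel_left, ← dist_eq_norm]; linarith [hM.dist_le q₂ hq₂ q₁ hq₁])
    (hqd hq₁) (hqd hq₂) hq₁r (by rwa [inner_neg_right, neg_nonneg] at hq₂r)
  exact ⟨p, hp, hmax, hM.sub_smul_mem hq₁ hq₂ h₁ h₂ hα hβ hc hd h⟩

theorem constantWidth (hM : IsDiametricallyComplete M w) (hne : M.Nonempty) (hw : 0 < w) :
    ConstantWidth M w := fun _ hd =>
  let ⟨_, hp, hmax, hq⟩ := hM.exists_isMaxOn_inner_sub_smul_mem hne hw hd
  sSup_sub_sInf_inner_eq hM.dist_le hd hp hmax hq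

end IsDiametricallyComplete

theorem constant_width_completion (D : Set E2) (hD : IsConvexBody D) :
    ∃ D' : Set E2, IsConvexBody D' ∧ D ⊆ D' ∧
      ConstantWidth D' (Metric.diam D) ∧ Metric.diam D' = Metric.diam D := by
  obtain ⟨hDc, -, x, hx⟩ := hD
  have hDnt : D.Nontrivial := (eq_singleton_or_nontrivial (interior_subset hx)).resolve_left
    fun h => by simp [h, interior_singleton] at hx
  have hw : 0 < diam D := diam_pos hDnt hDc.isBounded
  obtain ⟨M, hDM, hM⟩ := IsDiametricallyComplete.exists_superset hw.le
    fun _ hy _ hz => dist_le_diam_of_mem hDc.isBounded hy hz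
  refine ⟨M, ⟨hM.isCompact, hM.convex, x, interior_mono hDM hx⟩, hDM,
    hM.constantWidth (hDnt.nonempty.mono hDM) hw, ?_⟩
  exact le_antisymm (diam_le_of_forall_dist_le hw.le hM.dist_le) (diam_mono hDM hM.isBounded)

end
end

section
/- Let x₁x₂x₃ be a triangle, and let y₁, y₂ be points on the interior angle bisectors from x₁ and x₂ respectively. If |x₁y₁| = |x₂y₂| ≥ (1/2)·per(x₁x₂x₃), then |y₁y₂| > |x₁y₁|. -/
/-!
Put `u = x₂ - x₁`, `c = |x₁x₂|`, `s` the semiperimeter and `L = |x₁y₁| = |x₂y₂| ≥ s`, and write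
`y₁ = x₁ + w₁`, `y₂ = x₂ + w₂` with `|w₁| = |w₂| = L`. Then
`|y₁y₂|² - L² = c² - 2(P + Q) + L² + 2T` with `P = ⟪u, w₁⟫`, `Q = -⟪u, w₂⟫`, `T = -⟪w₁, w₂⟫`.
By Cauchy–Schwarz `P, Q ∈ [0, cL]`, and the half-angle identity `s sin(γ/2) = c cos(α/2) cos(β/2)`
becomes the bilinear relation `c s T = P Q`. Multiplied by `c s`, the expression is
`c s (c² + L² - 2cs) + 2(P - cs)(Q - cs)`; on the box the product is at least `-c²s(L - s)`,
which leaves at least `c s (L - c)² > 0` because `c < s ≤ L`.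
-/

open Set

noncomputable section

/-- `y` lies on the interior angle bisector of the triangle `x₁x₂x₃` emanating
from `x₁`: the ray from `x₁` in the direction of the sum of the unit vectors
towards `x₂` and `x₃`. -/
def OnBisector (x₁ x₂ x₃ y : E2) : Prop :=
  ∃ t : ℝ, 0 ≤ t ∧
    y = x₁ + t • (‖x₂ - x₁‖⁻¹ • (x₂ - x₁) + ‖x₃ - x₁‖⁻¹ • (x₃ - x₁))

theorem quadratic_pos_of_mul_eq {c s L P Q T : ℝ} (hc : 0 < c) (hcs : c < s) (hsL : s ≤ L)
    (hP₀ : 0 ≤ P) (hP₁ : P ≤ c * L) (hQ₀ : 0 ≤ Q) (hQ₁ : Q ≤ c * L) (hT : c * s * T = P * Q) :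
    0 < c ^ 2 - 2 * (P + Q) + L ^ 2 + 2 * T := by
  have hs : 0 < s := hc.trans hcs
  have hcs₀ : 0 ≤ c * s := by positivity
  have hcsL : 0 ≤ c * s * (c * L - c * s) :=
    mul_nonneg hcs₀ (sub_nonneg.2 (mul_le_mul_of_nonneg_left hsL hc.le))
  have hprod : -(c * s * (c * L - c * s)) ≤ (P - c * s) * (Q - c * s) := by
    rcases le_total P (c * s) with hP | hP <;> rcases le_total Q (c * s) with hQ | hQ
    · nlinarith [mul_nonneg (sub_nonneg.2 hP) (sub_nonneg.2 hQ)]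
    · nlinarith [mul_nonneg hP₀ (sub_nonneg.2 hQ), mul_nonneg hcs₀ (sub_nonneg.2 hQ₁)]
    · nlinarith [mul_nonneg hQ₀ (sub_nonneg.2 hP), mul_nonneg hcs₀ (sub_nonneg.2 hP₁)]
    · nlinarith [mul_nonneg (sub_nonneg.2 hP) (sub_nonneg.2 hQ)]
  have : 0 < c * s * (c ^ 2 - 2 * (P + Q) + L ^ 2 + 2 * T) := calc
    0 < c * s * (L - c) ^ 2 := by have := sub_pos.2 (hcs.trans_le hsL); positivity
    _ ≤ c * s * (c ^ 2 + L ^ 2 - 2 * c * s) + 2 * ((P - c * s) * (Q - c * s)) := by linarith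
    _ = _ := by linear_combination -2 * hT
  exact pos_of_mul_pos_right this hcs₀

theorem dist_lt_dist_add_dist_of_not_collinear {V : Type*} [NormedAddCommGroup V]
    [NormedSpace ℝ V] [StrictConvexSpace ℝ V] {x₁ x₂ x₃ : V}
    (h : ¬ Collinear ℝ ({x₁, x₂, x₃} : Set V)) :
    dist x₁ x₂ < dist x₁ x₃ + dist x₃ x₂ := by
  refine (dist_triangle x₁ x₃ x₂).lt_of_ne fun heq => h ?_
  simpa only [pair_comm] using (dist_add_dist_eq_iff.1 heq.symm).collinear

open RealInnerProductSpace

section InnerProductSpace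

variable {V : Type*} [NormedAddCommGroup V] [InnerProductSpace ℝ V]

theorem lt_norm_add_sub_of_mul_inner_eq {u w₁ w₂ : V} {s L : ℝ} (hu : 0 < ‖u‖) (hus : ‖u‖ < s)
    (hsL : s ≤ L) (hw₁ : ‖w₁‖ = L) (hw₂ : ‖w₂‖ = L) (h₁ : 0 ≤ ⟪u, w₁⟫) (h₂ : ⟪u, w₂⟫ ≤ 0)
    (hid : ‖u‖ * s * ⟪w₁, w₂⟫ = ⟪u, w₁⟫ * ⟪u, w₂⟫) :
    L < ‖u + w₂ - w₁‖ := by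
  have hexpand : ‖u + w₂ - w₁‖ ^ 2 - L ^ 2 =
      ‖u‖ ^ 2 - 2 * (⟪u, w₁⟫ + -⟪u, w₂⟫) + L ^ 2 + 2 * -⟪w₁, w₂⟫ := by
    rw [norm_sub_sq_real, norm_add_sq_real, inner_add_left, hw₁, hw₂, real_inner_comm w₂ w₁]
    ring
  have hQ : -⟪u, w₂⟫ ≤ ‖u‖ * L := by simpa [hw₂] using real_inner_le_norm u (-w₂)
  have hpos := quadratic_pos_of_mul_eq (T := -⟪w₁, w₂⟫) hu hus hsL h₁
    (hw₁ ▸ real_inner_le_norm u w₁) (neg_nonneg.2 h₂) hQ (by linear_combination -hid)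
  exact lt_of_pow_lt_pow_left₀ 2 (norm_nonneg _) (by linarith)

def bisectorDir (x₁ x₂ x₃ : V) : V :=
  ‖x₂ - x₁‖⁻¹ • (x₂ - x₁) + ‖x₃ - x₁‖⁻¹ • (x₃ - x₁)

theorem inner_sub_bisectorDir_nonneg (x₁ x₂ x₃ : V) :
    0 ≤ ⟪x₂ - x₁, bisectorDir x₁ x₂ x₃⟫ := by
  set u := x₂ - x₁
  set v := x₃ - x₁
  have hu : ⟪u, ‖u‖⁻¹ • u⟫ = ‖u‖ := by
    rw [real_inner_smul_right, real_inner_self_eq_norm_mul_norm, ← mul_assoc, inv_mul_mul_self]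
  have hv : ‖‖v‖⁻¹ • v‖ ≤ 1 := by
    rw [norm_smul, norm_inv, norm_norm]
    exact inv_mul_le_one_of_le₀ le_rfl (norm_nonneg v)
  have hCS := neg_le_of_abs_le (abs_real_inner_le_norm u (‖v‖⁻¹ • v))
  rw [bisectorDir, inner_add_right, hu]
  nlinarith [norm_nonneg u]

theorem inner_sub_bisectorDir_swap_nonpos (x₁ x₂ x₃ : V) :
    ⟪x₂ - x₁, bisectorDir x₂ x₁ x₃⟫ ≤ 0 := by
  have h := inner_sub_bisectorDir_nonneg x₂ x₁ x₃
  rwa [← neg_sub, inner_neg_left, neg_nonneg] at h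

/-- After dividing by the lengths of the two bisector directions this is the half-angle identity
`s sin(γ/2) = c cos(α/2) cos(β/2)`. -/
theorem mul_inner_bisectorDir_bisectorDir (x₁ x₂ x₃ : V) (h₁₂ : x₁ ≠ x₂) (h₁₃ : x₁ ≠ x₃)
    (h₂₃ : x₂ ≠ x₃) :
    dist x₁ x₂ * ((dist x₁ x₂ + dist x₂ x₃ + dist x₃ x₁) / 2) *
        ⟪bisectorDir x₁ x₂ x₃, bisectorDir x₂ x₁ x₃⟫ =
      ⟪x₂ - x₁, bisectorDir x₁ x₂ x₃⟫ * ⟪x₂ - x₁, bisectorDir x₂ x₁ x₃⟫ := by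
  have hc : ‖x₂ - x₁‖ ≠ 0 := norm_ne_zero_iff.2 (sub_ne_zero.2 h₁₂.symm)
  have hb : ‖x₃ - x₁‖ ≠ 0 := norm_ne_zero_iff.2 (sub_ne_zero.2 h₁₃.symm)
  have ha : ‖x₃ - x₂‖ ≠ 0 := norm_ne_zero_iff.2 (sub_ne_zero.2 h₂₃.symm)
  have hx : x₁ - x₂ = -(x₂ - x₁) := by abel
  have hy : x₃ - x₂ = (x₃ - x₁) - (x₂ - x₁) := by abel
  simp only [bisectorDir, dist_eq_norm', hx, norm_neg]
  rw [norm_sub_rev x₁ x₃, hy]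
  rw [hy] at ha
  clear hx hy h₁₂ h₁₃ h₂₃
  generalize x₂ - x₁ = u at *
  generalize x₃ - x₁ = v at *
  have hlaw := norm_sub_sq_real v u
  simp only [inner_add_left, inner_add_right, inner_sub_right, inner_neg_right,
    real_inner_smul_left, real_inner_smul_right, real_inner_self_eq_norm_sq,
    real_inner_comm u v] at *
  field_simp
  linear_combination -(‖u‖ * ‖v‖ + ⟪u, v⟫) * hlaw

end InnerProductSpace

theorem onBisector_iff {x₁ x₂ x₃ y : E2} :
    OnBisector x₁ x₂ x₃ y ↔ ∃ t : ℝ, 0 ≤ t ∧ y = x₁ + t • bisectorDir x₁ x₂ x₃ :=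
  Iff.rfl

theorem balitskiy_lemma (x₁ x₂ x₃ y₁ y₂ : E2)
    (hncol : ¬ Collinear ℝ ({x₁, x₂, x₃} : Set E2))
    (hy₁ : OnBisector x₁ x₂ x₃ y₁) (hy₂ : OnBisector x₂ x₁ x₃ y₂)
    (heq : dist x₁ y₁ = dist x₂ y₂)
    (hper : (1/2) * (dist x₁ x₂ + dist x₂ x₃ + dist x₃ x₁) ≤ dist x₁ y₁) :
    dist x₁ y₁ < dist y₁ y₂ := by
  obtain ⟨t₁, ht₁, rfl⟩ := onBisector_iff.1 hy₁
  obtain ⟨t₂, ht₂, rfl⟩ := onBisector_iff.1 hy₂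
  set d₁ := bisectorDir x₁ x₂ x₃
  set d₂ := bisectorDir x₂ x₁ x₃
  simp only [dist_self_add_right] at heq hper ⊢
  have hdist : dist (x₁ + t₁ • d₁) (x₂ + t₂ • d₂) = ‖(x₂ - x₁) + t₂ • d₂ - t₁ • d₁‖ := by
    rw [dist_comm, dist_eq_norm]; congr 1; abel
  rw [hdist]
  have hc : 0 < ‖x₂ - x₁‖ := by
    rw [← dist_eq_norm']; exact dist_pos.2 (ne₁₂_of_not_collinear hncol)
  have htri := dist_lt_dist_add_dist_of_not_collinear hncol
  have hid := mul_inner_bisectorDir_bisectorDir x₁ x₂ x₃ (ne₁₂_of_not_collinear hncol)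
    (ne₁₃_of_not_collinear hncol) (ne₂₃_of_not_collinear hncol)
  refine lt_norm_add_sub_of_mul_inner_eq (s := (dist x₁ x₂ + dist x₂ x₃ + dist x₃ x₁) / 2) hc
    ?_ (by linarith) rfl heq.symm ?_ ?_ ?_
  · rw [← dist_eq_norm']; linarith [dist_comm x₁ x₃, dist_comm x₃ x₂]
  · rw [real_inner_smul_right]; exact mul_nonneg ht₁ (inner_sub_bisectorDir_nonneg x₁ x₂ x₃)
  · rw [real_inner_smul_right]
    exact mul_nonpos_of_nonneg_of_nonpos ht₂ (inner_sub_bisectorDir_swap_nonpos x₁ x₂ x₃)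
  · simp only [real_inner_smul_left, real_inner_smul_right, ← dist_eq_norm']
    linear_combination t₁ * t₂ * hid

end
end
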